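/- General solution of the canonical equation (d2): let λ ∈ ℝ and let g, h : ℝ → ℝ be C^∞ functions such that g′(x)/(h(t) − λg(x)) > 0 for all (t,x) ∈ ℝ² (in particular h(t) − λg(x) ≠ 0). Then the function u(t,x) = ln( g′(x) / (h(t) − λ g(x)) ) is a C^∞ solution of u_{tx} = λ·u_t·exp(u) on ℝ². -/

import Mathlib

/-! Along the line `x = const` the function `e^u = g'(x)/(h(t) - λ g(x))` is `a/D(t)` with
`D = h - λ g(x)`, so `u_t = -h'/D`; and `u_x = g''/g' + λ g'/D`, whose `t`-derivative
`-λ g' h'/D²` is exactly `λ · (-h'/D) · (g'/D) = λ u_t e^u`. -/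

open Real

theorem hasDerivAt_log_div {f k : ℝ → ℝ} {f' k' x : ℝ} (hf : HasDerivAt f f' x)
    (hk : HasDerivAt k k' x) (hfx : f x ≠ 0) (hkx : k x ≠ 0) :
    HasDerivAt (fun y => log (f y / k y)) (f' / f x - k' / k x) x := by
  refine ((hf.div hk hkx).log (div_ne_zero hfx hkx)).congr_deriv ?_
  simp only [Pi.div_apply]
  field_simp

section

variable {g h : ℝ → ℝ} {lam : ℝ}

theorem hasDerivAt_log_deriv_div_sub (c : ℝ) {x : ℝ} (hg : DifferentiableAt ℝ g x)
    (hg' : DifferentiableAt ℝ (deriv g) x) (hG : deriv g x ≠ 0) (hD : c - lam * g x ≠ 0) :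
    HasDerivAt (fun y => log (deriv g y / (c - lam * g y)))
      (deriv (deriv g) x / deriv g x + lam * deriv g x / (c - lam * g x)) x := by
  refine (hasDerivAt_log_div hg'.hasDerivAt
    ((hg.hasDerivAt.const_mul lam).const_sub c) hG hD).congr_deriv ?_
  ring

theorem hasDerivAt_log_const_div_sub (a c : ℝ) {t : ℝ} (hh : DifferentiableAt ℝ h t)
    (ha : a ≠ 0) (hD : h t - c ≠ 0) :
    HasDerivAt (fun s => log (a / (h s - c))) (-deriv h t / (h t - c)) t := by
  refine (hasDerivAt_log_div (hasDerivAt_const t a) (hh.hasDerivAt.sub_const c) ha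
    hD).congr_deriv ?_
  ring

theorem hasDerivAt_const_add_const_div_sub (a b c : ℝ) {t : ℝ} (hh : DifferentiableAt ℝ h t)
    (hD : h t - c ≠ 0) :
    HasDerivAt (fun s => a + b / (h s - c)) (-(b * deriv h t) / (h t - c) ^ 2) t := by
  refine (((hasDerivAt_const t b).div (hh.hasDerivAt.sub_const c) hD).const_add a).congr_deriv ?_
  ring

end

theorem d2_general_solution (lam : ℝ) (g h : ℝ → ℝ)
    (hg : ContDiff ℝ (⊤ : ℕ∞) g) (hh : ContDiff ℝ (⊤ : ℕ∞) h)
    (hpos : ∀ t x : ℝ, 0 < deriv g x / (h t - lam * g x))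
    (u : ℝ × ℝ → ℝ)
    (hu : u = fun p => Real.log (deriv g p.2 / (h p.1 - lam * g p.2))) :
    ContDiff ℝ (⊤ : ℕ∞) u ∧
    ∀ t x : ℝ,
      deriv (fun s => deriv (fun y => u (s, y)) x) t
        = lam * deriv (fun s => u (s, x)) t * Real.exp (u (t, x)) := by
  subst hu
  have hG x : deriv g x ≠ 0 := (div_ne_zero_iff.mp (hpos 0 x).ne').1
  have hD t x : h t - lam * g x ≠ 0 := (div_ne_zero_iff.mp (hpos t x).ne').2
  have hg' : ContDiff ℝ (⊤ : ℕ∞) (deriv g) := (contDiff_infty_iff_deriv.mp hg).2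
  refine ⟨?_, fun t x => ?_⟩
  · exact ((hg'.comp contDiff_snd).div ((hh.comp contDiff_fst).sub
      (contDiff_const.mul (hg.comp contDiff_snd))) fun p => hD p.1 p.2).log
      fun p => (hpos p.1 p.2).ne'
  have hgx : DifferentiableAt ℝ g x := hg.differentiable (by simp) x
  have hg'x : DifferentiableAt ℝ (deriv g) x := hg'.differentiable (by simp) x
  have hht : DifferentiableAt ℝ h t := hh.differentiable (by simp) t
  have u_x : (fun s => deriv (fun y => log (deriv g y / (h s - lam * g y))) x) =
      fun s => deriv (deriv g) x / deriv g x + lam * deriv g x / (h s - lam * g x) :=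
    funext fun s => (hasDerivAt_log_deriv_div_sub (h s) hgx hg'x (hG x) (hD s x)).deriv
  rw [u_x, (hasDerivAt_const_add_const_div_sub _ _ _ hht (hD t x)).deriv,
    (hasDerivAt_log_const_div_sub _ _ hht (hG x) (hD t x)).deriv, exp_log (hpos t x)]
  field_simp
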